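/- Lemma (One-step state invariance for pure types). If ⊢e:τ in the empty typing context, (s,e)⟶(s',e'), and ⊢τ pure, then s'=s. -/

import Mathlib

/-! Action calculus of "A framework for natural language interfaces to
action-based applications". -/

/-- Types of the action calculus: `Obj`, `Bool`, `Act`, and function types. -/
inductive Ty : Type
  | obj : Ty
  | bool : Ty
  | act : Ty
  | fn : Ty → Ty → Ty
deriving DecidableEq

/-- `⊢ τ pure`: a type is pure iff it is `Obj`, `Bool`, or a function type. -/
inductive Ty.Pure : Ty → Prop
  | obj : Ty.Pure .obj
  | bool : Ty.Pure .bool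
  | fn (τ₁ τ₂ : Ty) : Ty.Pure (.fn τ₁ τ₂)

/-- `⊢ τ ok`: well-formedness of a function type: either both components are
pure, or the codomain is `Act`. -/
inductive Ty.Ok : Ty → Prop
  | pure {τ₁ τ₂ : Ty} : Ty.Pure τ₁ → Ty.Pure τ₂ → Ty.Ok (.fn τ₁ τ₂)
  | act (τ : Ty) : Ty.Ok (.fn τ .act)

/-- An application model `M = (I, S, O, π)` together with its interface
`I = (C, P, A, 𝒞, σ)`. -/
structure Model : Type 1 where
  /-- constant names `C` -/
  CN : Type
  /-- predicate names `P` -/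
  PN : Type
  /-- action names `A` -/
  AN : Type
  /-- classes `𝒞` -/
  Cl : Type
  /-- states `S` -/
  State : Type
  /-- objects `O` -/
  Obj : Type
  /-- arity of each predicate name -/
  pArity : PN → ℕ
  /-- arity of each action name -/
  aArity : AN → ℕ
  /-- class information `σ(c) ⊆ 𝒞` for constants -/
  σC : CN → Set Cl
  /-- class information `σ(p) ⊆ 𝒞ⁿ` for predicates (tuples as lists) -/
  σP : PN → Set (List Cl)
  /-- class information `σ(a) ⊆ 𝒞ⁿ` for actions -/
  σA : AN → Set (List Cl)
  /-- class information `σ(o) ⊆ 𝒞` for objects -/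
  σO : Obj → Set Cl
  /-- interpretation of constants: `π(s)(c) ∈ O` -/
  πC : State → CN → Obj
  /-- interpretation of predicates: a partial (`Option`-valued) function on
  tuples of objects, returning a truth value -/
  πP : State → PN → List Obj → Option Bool
  /-- interpretation of actions: a partial (`Option`-valued) function on
  tuples of objects, returning a state -/
  πA : State → AN → List Obj → Option State
  /-- tuples in `σ(p)` have length the arity of `p` -/
  σP_arity : ∀ p cs, cs ∈ σP p → cs.length = pArity p
  /-- tuples in `σ(a)` have length the arity of `a` -/
  σA_arity : ∀ a cs, cs ∈ σA a → cs.length = aArity a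
  /-- `π(s)(p)` is defined at least on tuples whose classes meet `σ(p)` -/
  πP_defined : ∀ s p (os : List Obj),
    (∃ cs ∈ σP p, List.Forall₂ (fun c o => c ∈ σO o) cs os) → (πP s p os).isSome
  /-- `π(s)(a)` is defined at least on tuples whose classes meet `σ(a)` -/
  πA_defined : ∀ s a (os : List Obj),
    (∃ cs ∈ σA a, List.Forall₂ (fun c o => c ∈ σO o) cs os) → (πA s a os).isSome
  /-- `σ(c) ⊆ σ(π(s)(c))` for all states `s` -/
  σC_sub : ∀ s c, σC c ⊆ σO (πC s c)

namespace Model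

variable (M : Model)

/-- `σ(o₁) × … × σ(oₙ) ∩ S ≠ ∅`: the tuple of objects matches some class
tuple in `S`. -/
def ClassMeet (os : List M.Obj) (S : Set (List M.Cl)) : Prop :=
  ∃ cs ∈ S, List.Forall₂ (fun c o => c ∈ M.σO o) cs os

/-- Expressions of the action calculus (variables are names in `ℕ`). -/
inductive Expr : Type
  | var : ℕ → Expr
  | tt : Expr
  | ff : Expr
  | lam : ℕ → Ty → Expr → Expr
  | skip : Expr
  | obj : M.Obj → Expr
  | exc : Expr                       -- the exception ⋆
  | con : M.CN → Expr                -- id_c()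
  | pred : M.PN → List Expr → Expr   -- id_p(e₁,…,eₙ)
  | act : M.AN → List Expr → Expr    -- id_a(e₁,…,eₙ)
  | app : Expr → Expr → Expr
  | ite : Expr → Expr → Expr → Expr  -- e₁ ? e₂ : e₃
  | seq : Expr → Expr → Expr         -- e₁ ; e₂

variable {M}

/-- Values: `true`, `false`, `skip`, λ-abstractions, object values, and `⋆`. -/
inductive Expr.IsValue : M.Expr → Prop
  | tt : Expr.IsValue .tt
  | ff : Expr.IsValue .ff
  | skip : Expr.IsValue .skip
  | lam (x τ e) : Expr.IsValue (.lam x τ e)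
  | obj (o) : Expr.IsValue (.obj o)
  | exc : Expr.IsValue .exc

/-- Recover the list of objects from a list of object-value expressions. -/
def objList? : List M.Expr → Option (List M.Obj)
  | [] => some []
  | (Expr.obj o) :: es => (objList? es).map (o :: ·)
  | _ => none

/-- Simultaneous substitution `γ̂(e)`: replace each variable in the domain of
the partial map `γ` by its image, homomorphically on all other constructors
(the bound variable of a λ is removed from the domain). -/
def Expr.subst (γ : ℕ → Option M.Expr) : M.Expr → M.Expr
  | .var x => (γ x).getD (.var x)
  | .tt => .tt
  | .ff => .ff
  | .lam x τ e => .lam x τ (e.subst (fun y => if y = x then none else γ y))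
  | .skip => .skip
  | .obj o => .obj o
  | .exc => .exc
  | .con c => .con c
  | .pred p es => .pred p (es.attach.map (fun e => e.1.subst γ))
  | .act a es => .act a (es.attach.map (fun e => e.1.subst γ))
  | .app e₁ e₂ => .app (e₁.subst γ) (e₂.subst γ)
  | .ite e₁ e₂ e₃ => .ite (e₁.subst γ) (e₂.subst γ) (e₃.subst γ)
  | .seq e₁ e₂ => .seq (e₁.subst γ) (e₂.subst γ)
decreasing_by
  all_goals simp_wf
  all_goals first
    | (have := List.sizeOf_lt_of_mem e.2; omega)
    | omega

/-- Capture-permitting single substitution `e[x ← e']` (adequate here since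
substituends are closed). -/
def Expr.subst1 (x : ℕ) (e' : M.Expr) (e : M.Expr) : M.Expr :=
  e.subst (fun y => if y = x then some e' else none)

/-- Typing contexts: partial maps from variables to types. -/
def Ctx : Type := ℕ → Option Ty

/-- The empty typing context. -/
def Ctx.empty : Ctx := fun _ => none

/-- Context extension `Γ, x:τ`. -/
def Ctx.update (Γ : Ctx) (x : ℕ) (τ : Ty) : Ctx :=
  fun y => if y = x then some τ else Γ y

variable (M)

/-- The typing judgment `Γ ⊢ e : τ` of the action calculus. -/
inductive HasTy : Ctx → M.Expr → Ty → Prop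
  | var {Γ x τ} : Γ x = some τ → HasTy Γ (.var x) τ
  | obj {Γ} (o) : HasTy Γ (.obj o) .obj
  | tt {Γ} : HasTy Γ .tt .bool
  | ff {Γ} : HasTy Γ .ff .bool
  | exc {Γ τ} : HasTy Γ .exc τ
  | app {Γ e₁ e₂ τ τ'} : HasTy Γ e₁ (.fn τ τ') → HasTy Γ e₂ τ →
      HasTy Γ (.app e₁ e₂) τ'
  | lam {Γ x τ τ' e} : HasTy (Γ.update x τ) e τ' → Ty.Ok (.fn τ τ') →
      HasTy Γ (.lam x τ e) (.fn τ τ')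
  | ite {Γ e₁ e₂ e₃ τ} : HasTy Γ e₁ .bool → HasTy Γ e₂ τ → HasTy Γ e₃ τ →
      HasTy Γ (.ite e₁ e₂ e₃) τ
  | skip {Γ} : HasTy Γ .skip .act
  | seq {Γ e₁ e₂} : HasTy Γ e₁ .act → HasTy Γ e₂ .act →
      HasTy Γ (.seq e₁ e₂) .act
  | con {Γ} (c) : HasTy Γ (.con c) .obj
  | pred {Γ p es} : es.length = M.pArity p → (∀ e ∈ es, HasTy Γ e .obj) →
      HasTy Γ (.pred p es) .bool
  | act {Γ a es} : es.length = M.aArity a → (∀ e ∈ es, HasTy Γ e .obj) →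
      HasTy Γ (.act a es) .act

/-- The small-step operational semantics `(s, e) ⟶ (s', e')`. -/
inductive Step : M.State → M.Expr → M.State → M.Expr → Prop
  -- (Red App 1)
  | app1 {s e₁ e₁' e₂} : Step s e₁ s e₁' → Step s (.app e₁ e₂) s (.app e₁' e₂)
  -- (Red App 2)
  | app2 {s e₁ e₂} : Step s e₁ s .exc → Step s (.app e₁ e₂) s .exc
  -- ⋆ in head position propagates
  | appExc {s e₂} : Step s (.app .exc e₂) s .exc
  -- (Red App 3): call-by-name β-reduction
  | app3 {s x τ e₁ e₂} : Step s (.app (.lam x τ e₁) e₂) s (e₁.subst1 x e₂)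
  -- (Red OCon)
  | ocon {s c} : Step s (.con c) s (.obj (M.πC s c))
  -- (Red PCon 1)
  | pcon1 {s e e' p l₁ l₂} : Step s e s e' →
      Step s (.pred p (l₁ ++ e :: l₂)) s (.pred p (l₁ ++ e' :: l₂))
  -- (Red PCon 2)
  | pcon2 {s e p l₁ l₂} : Step s e s .exc →
      Step s (.pred p (l₁ ++ e :: l₂)) s .exc
  -- (Red PCon 3), class information matches: value returned by π
  | pcon3 {s p es os b} : objList? es = some os →
      M.ClassMeet os (M.σP p) → M.πP s p os = some b →
      Step s (.pred p es) s (if b then .tt else .ff)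
  -- (Red PCon 3), class mismatch: δ_p yields ⋆
  | pcon4 {s p es} : (∀ e ∈ es, e.IsValue) →
      (∀ os, objList? es = some os → ¬ M.ClassMeet os (M.σP p)) →
      Step s (.pred p es) s .exc
  -- (Red If 1)
  | if1 {s e₁ e₁' e₂ e₃} : Step s e₁ s e₁' →
      Step s (.ite e₁ e₂ e₃) s (.ite e₁' e₂ e₃)
  -- (Red If 2)
  | if2 {s e₁ e₂ e₃} : Step s e₁ s .exc → Step s (.ite e₁ e₂ e₃) s .exc
  -- ⋆ in condition position propagates
  | ifExc {s e₂ e₃} : Step s (.ite .exc e₂ e₃) s .exc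
  -- (Red If 3)
  | if3t {s e₂ e₃} : Step s (.ite .tt e₂ e₃) s e₂
  | if3f {s e₂ e₃} : Step s (.ite .ff e₂ e₃) s e₃
  -- (Red Seq 1): the only rule in which the state may change in the premise
  | seq1 {s s' e₁ e₁' e₂} : Step s e₁ s' e₁' → Step s (.seq e₁ e₂) s' (.seq e₁' e₂)
  -- (Red Seq 2)
  | seq2 {s e} : Step s (.seq .exc e) s .exc
  -- (Red Seq 3)
  | seq3 {s e} : Step s (.seq .skip e) s e
  -- (Red ACon 1)
  | acon1 {s e e' a l₁ l₂} : Step s e s e' →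
      Step s (.act a (l₁ ++ e :: l₂)) s (.act a (l₁ ++ e' :: l₂))
  -- (Red ACon 2)
  | acon2 {s e a l₁ l₂} : Step s e s .exc →
      Step s (.act a (l₁ ++ e :: l₂)) s .exc
  -- (Red ACon 3): class information matches; the state changes via π
  | acon3 {s s' a es os} : objList? es = some os →
      M.ClassMeet os (M.σA a) → M.πA s a os = some s' →
      Step s (.act a es) s' .skip
  -- (Red ACon 4): class mismatch: δ_a yields ⋆, state unchanged
  | acon4 {s a es} : (∀ e ∈ es, e.IsValue) →
      (∀ os, objList? es = some os → ¬ M.ClassMeet os (M.σA a)) →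
      Step s (.act a es) s .exc

/-- `(s, e) ⟶* (s', e')`: reflexive-transitive closure of the step relation. -/
def Steps : M.State × M.Expr → M.State × M.Expr → Prop :=
  Relation.ReflTransGen (fun a b => M.Step a.1 a.2 b.1 b.2)

variable {M}

/-- The logical relation `R_τ`. -/
def LogRel : Ty → Set M.Expr
  | .obj => {e | M.HasTy Ctx.empty e .obj ∧
      ∀ s, ∃ s' v, M.Steps (s, e) (s', v) ∧ v.IsValue}
  | .bool => {e | M.HasTy Ctx.empty e .bool ∧
      ∀ s, ∃ s' v, M.Steps (s, e) (s', v) ∧ v.IsValue}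
  | .act => {e | M.HasTy Ctx.empty e .act ∧
      ∀ s, ∃ s' v, M.Steps (s, e) (s', v) ∧ v.IsValue}
  | .fn τ₁ τ₂ => {e | M.HasTy Ctx.empty e (.fn τ₁ τ₂) ∧
      (∀ s, ∃ s' v, M.Steps (s, e) (s', v) ∧ v.IsValue) ∧
      ∀ e' ∈ LogRel τ₁, Expr.app e e' ∈ LogRel τ₂}

/-- `γ ⊨ Γ`: the substitution `γ` and context `Γ` have the same domain, and
`γ(x) ∈ R_{Γ(x)}` for every `x` in the domain. -/
def SubstModels (γ : ℕ → Option M.Expr) (Γ : Ctx) : Prop :=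
  (∀ x, (γ x).isSome ↔ (Γ x).isSome) ∧
  (∀ x e τ, γ x = some e → Γ x = some τ → e ∈ LogRel τ)

end Model

theorem Ty.not_pure_act : ¬ Ty.Pure .act := nofun

namespace Model

/-- Only (Red Seq 1) and (Red ACon 3) can change the state, and both reduce expressions of type `Act`. -/
theorem HasTy.eq_act_of_step_ne_state {M : Model} {Γ : Ctx} {e e' : M.Expr} {τ : Ty}
    {s s' : M.State} (h : M.HasTy Γ e τ) (hs : M.Step s e s' e') (hne : s' ≠ s) :
    τ = .act := by
  cases hs <;> first
    | exact absurd rfl hne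
    | (cases h; rfl)

end Model

/-- **Lemma (One-step state invariance for pure types).** If `⊢ e : τ` in the
empty typing context, `(s, e) ⟶ (s', e')`, and `⊢ τ pure`, then `s' = s`. -/
theorem one_step_state_invariance (M : Model) {e e' : M.Expr} {τ : Ty}
    {s s' : M.State} (h : M.HasTy Model.Ctx.empty e τ)
    (hs : M.Step s e s' e') (hp : τ.Pure) :
    s' = s := by
  by_contra hne
  exact Ty.not_pure_act (h.eq_act_of_step_ne_state hs hne ▸ hp)
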